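/- Let k and m be positive integers with k even. Then T_k(m) ≡ (2^{k−1} − 1) · Σ_{p prime, p | (2m+1), (p−1) | k} ((2m+1)/p) (mod 2m+1). -/

import Mathlib

/-- `T k m = 1^k + 3^k + ⋯ + (2m-1)^k`, the sum of the k-th powers of the
first `m` odd positive integers. -/
def T (k m : ℕ) : ℕ := ∑ j ∈ Finset.range m, (2 * j + 1) ^ k

/-!
Write `n = 2m + 1` and `S = ∑_{x<n} x^k`. For odd `n` and `k > 0` one has the congruence of
Carlitz and von Staudt, `S ≡ -∑_{p ∣ n, (p-1) ∣ k} n/p (mod n)`. It is checked one prime power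
`q^e ∣ n` at a time: `S` is `n/q^e` copies of the power sum up to `q^e`; modulo a prime that sum is
the sum of `x^k` over `𝔽_q`, and passing from `q^e` to `q^(e+1)` multiplies it by `q`, by a
first-order binomial expansion. On the other side, only the term `p = q` survives modulo `q^e`.

For even `k` the reflection `x ↦ n - x` gives `S ≡ 2 P (mod n)` with `P = ∑_{j ≤ m} j^k`, and the
even numbers below `n` contribute `2^k P` to `S`. Hence
`T = S - 2^(k-1) (2P) ≡ (1 - 2^(k-1)) S ≡ (2^(k-1) - 1) ∑ n/p (mod n)`.
-/

open Finset

theorem FiniteField.sum_pow_of_ne_zero (K : Type*) [Field K] [Fintype K] {k : ℕ} (hk : k ≠ 0) :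
    ∑ x : K, x ^ k = if Fintype.card K - 1 ∣ k then -1 else 0 := by
  classical
  rw [← FiniteField.sum_pow_units K k, ← Fintype.sum_subtype_add_sum_subtype (· ≠ 0),
    ← Fintype.sum_equiv unitsEquivNeZero (fun x : Kˣ => (x : K) ^ k)
      (fun x : {a : K // a ≠ 0} => (x : K) ^ k) (fun _ => rfl), add_eq_left]
  exact sum_eq_zero fun x _ => by simp [of_not_not x.2, hk]

theorem ZMod.sum_range_natCast {M : Type*} [AddCommMonoid M] (n : ℕ) [NeZero n]
    (f : ZMod n → M) :
    ∑ x ∈ range n, f x = ∑ x : ZMod n, f x :=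
  sum_nbij' (↑) ZMod.val (by simp) (by simp [ZMod.val_lt])
    (fun _ ha => ZMod.val_cast_of_lt (mem_range.mp ha)) (fun a _ => ZMod.natCast_zmod_val a)
    (fun _ _ => rfl)

theorem sum_range_pow_modEq_prime {q : ℕ} (hq : q.Prime) {k : ℕ} (hk : k ≠ 0) :
    ∑ x ∈ range q, (x : ℤ) ^ k ≡ if q - 1 ∣ k then -1 else 0 [ZMOD q] := by
  have := Fact.mk hq
  rw [← ZMod.intCast_eq_intCast_iff]
  push_cast
  rw [ZMod.sum_range_natCast q (· ^ k), FiniteField.sum_pow_of_ne_zero _ hk, ZMod.card]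

theorem sum_range_mul_eq_sum_sum {M : Type*} [AddCommMonoid M] (f : ℕ → M) (c N : ℕ) :
    ∑ x ∈ range (c * N), f x = ∑ b ∈ range c, ∑ a ∈ range N, f (N * b + a) := by
  induction c with
  | zero => simp
  | succ c ih => rw [Nat.succ_mul, sum_range_add, ih, sum_range_succ, mul_comm c N]

theorem sum_range_mul_pow_modEq (k c N : ℕ) :
    ∑ x ∈ range (c * N), (x : ℤ) ^ k ≡ c * ∑ a ∈ range N, (a : ℤ) ^ k [ZMOD N] := by
  have : ∑ x ∈ range (c * N), (x : ℤ) ^ k ≡ ∑ _b ∈ range c, ∑ a ∈ range N, (a : ℤ) ^ k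
      [ZMOD N] := by
    rw [sum_range_mul_eq_sum_sum]
    refine Int.ModEq.sum fun b _ => Int.ModEq.sum fun a _ => Int.ModEq.pow k ?_
    simp [Int.ModEq]
  simpa using this

theorem Odd.dvd_sum_range_id {q : ℕ} (hq : Odd q) : q ∣ ∑ b ∈ range q, b :=
  (Nat.coprime_two_right.mpr hq).dvd_of_dvd_mul_right
    (sum_range_id_mul_two q ▸ dvd_mul_right q (q - 1))

theorem sum_range_mul_pow_modEq_of_odd_of_dvd (k : ℕ) {q N : ℕ} (hq : Odd q) (hqN : q ∣ N) :
    ∑ x ∈ range (q * N), (x : ℤ) ^ k ≡ q * ∑ a ∈ range N, (a : ℤ) ^ k [ZMOD q * N] := by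
  have hN : (q * N : ℤ) ∣ (N : ℤ) ^ 2 := by
    rw [sq]; exact mul_dvd_mul_right (by exact_mod_cast hqN) _
  -- `(a + N b)^k ≡ a^k + k a^(k-1) N b (mod N²)`; summed over `b < q`, the linear terms carry the
  -- factor `N ∑_{b<q} b`, which `q N` divides because `q` is odd.
  have hterm : ∀ b a : ℕ, ((N * b + a : ℕ) : ℤ) ^ k ≡ a ^ k + a ^ (k - 1) * (N * b) * k
      [ZMOD q * N] := by
    intro b a
    refine (Int.modEq_iff_dvd.mpr ?_).symm
    have := sq_dvd_add_pow_sub_sub ((N : ℤ) * b) a k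
    rw [mul_pow] at this
    push_cast
    calc (q * N : ℤ) ∣ _ := hN.trans ((dvd_mul_right _ _).trans this)
      _ = _ := by ring
  have hgauss : (q * N : ℤ) ∣ N * ∑ b ∈ range q, (b : ℤ) := by
    rw [mul_comm (q : ℤ)]
    exact mul_dvd_mul_left _
      (by rw [← Nat.cast_sum]; exact Int.natCast_dvd_natCast.mpr hq.dvd_sum_range_id)
  calc ∑ x ∈ range (q * N), (x : ℤ) ^ k
      = ∑ b ∈ range q, ∑ a ∈ range N, ((N * b + a : ℕ) : ℤ) ^ k := sum_range_mul_eq_sum_sum _ q N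
    _ ≡ ∑ b ∈ range q, ∑ a ∈ range N, ((a : ℤ) ^ k + a ^ (k - 1) * (N * b) * k) [ZMOD q * N] :=
        Int.ModEq.sum fun b _ => Int.ModEq.sum fun a _ => hterm b a
    _ = q * ∑ a ∈ range N, (a : ℤ) ^ k
          + N * (∑ b ∈ range q, (b : ℤ)) * (k * ∑ a ∈ range N, (a : ℤ) ^ (k - 1)) := by
        simp only [sum_add_distrib, sum_const, card_range, nsmul_eq_mul, mul_sum, sum_mul]
        rw [sum_comm (s := range q)]
        exact congrArg _ (sum_congr rfl fun _ _ => sum_congr rfl fun _ _ => by ring)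
    _ ≡ q * ∑ a ∈ range N, (a : ℤ) ^ k + 0 [ZMOD q * N] :=
        Int.ModEq.add_left _ (Int.modEq_zero_iff_dvd.mpr (hgauss.mul_right _))
    _ = q * ∑ a ∈ range N, (a : ℤ) ^ k := add_zero _

theorem sum_range_prime_pow_pow_modEq {q : ℕ} (hq : q.Prime) (hodd : Odd q) {k : ℕ} (hk : k ≠ 0)
    (e : ℕ) :
    ∑ x ∈ range (q ^ (e + 1)), (x : ℤ) ^ k ≡ if q - 1 ∣ k then -(q : ℤ) ^ e else 0
      [ZMOD q ^ (e + 1)] := by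
  induction e with
  | zero => simpa using sum_range_pow_modEq_prime hq hk
  | succ e ih =>
    have hlift := sum_range_mul_pow_modEq_of_odd_of_dvd k hodd (dvd_pow_self q e.add_one_ne_zero)
    push_cast at hlift
    rw [← pow_succ', ← pow_succ'] at hlift
    refine hlift.trans ?_
    have := ih.mul_left' (c := (q : ℤ))
    rw [← pow_succ'] at this
    convert this using 1
    split_ifs <;> ring

theorem sum_range_pow_modEq_of_prime_pow_dvd {n q e k : ℕ} (hn : Odd n) (hq : q.Prime)
    (hqn : q ^ (e + 1) ∣ n) (hk : k ≠ 0) :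
    ∑ x ∈ range n, (x : ℤ) ^ k ≡ -∑ p ∈ n.primeFactors with p - 1 ∣ k, ((n / p : ℕ) : ℤ)
      [ZMOD q ^ (e + 1)] := by
  have hqn' : q ∣ n := (dvd_pow_self q e.add_one_ne_zero).trans hqn
  have hS : ∑ x ∈ range n, (x : ℤ) ^ k ≡
      (n / q ^ (e + 1) : ℕ) * (if q - 1 ∣ k then -(q : ℤ) ^ e else 0) [ZMOD q ^ (e + 1)] := by
    have := sum_range_mul_pow_modEq k (n / q ^ (e + 1)) (q ^ (e + 1))
    rw [Nat.div_mul_cancel hqn] at this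
    push_cast at this
    exact this.trans ((sum_range_prime_pow_pow_modEq hq (hn.of_dvd_nat hqn') hk e).mul_left _)
  have hF : ∑ p ∈ n.primeFactors with p - 1 ∣ k, ((n / p : ℕ) : ℤ) ≡
      if q ∈ {p ∈ n.primeFactors | p - 1 ∣ k} then ((n / q : ℕ) : ℤ) else 0
      [ZMOD q ^ (e + 1)] := by
    refine Int.sum_modEq_ite fun p hp hpq => Int.modEq_zero_iff_dvd.mpr ?_
    obtain ⟨hp, hpn, -⟩ := Nat.mem_primeFactors.mp (mem_filter.mp hp).1
    have hcop := Nat.Coprime.pow_left (e + 1) ((Nat.coprime_primes hq hp).mpr hpq.symm)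
    exact_mod_cast hcop.dvd_of_dvd_mul_right (by rwa [Nat.div_mul_cancel hpn])
  have hmem : q ∈ {p ∈ n.primeFactors | p - 1 ∣ k} ↔ q - 1 ∣ k := by
    simp [hq, hqn', hn.pos.ne']
  have hdiv : n / q = n / q ^ (e + 1) * q ^ e :=
    Nat.div_eq_of_eq_mul_left hq.pos (by rw [mul_assoc, ← pow_succ, Nat.div_mul_cancel hqn])
  simp only [hmem, hdiv] at hF
  refine hS.trans ?_
  convert hF.neg.symm using 1
  split_ifs <;> push_cast <;> ring

theorem sum_range_pow_modEq_neg_sum_primeFactors {n k : ℕ} (hn : Odd n) (hk : k ≠ 0) :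
    ∑ x ∈ range n, (x : ℤ) ^ k ≡ -∑ p ∈ n.primeFactors with p - 1 ∣ k, ((n / p : ℕ) : ℤ)
      [ZMOD n] := by
  rw [Int.modEq_comm, Int.modEq_iff_dvd, Int.natCast_dvd, Nat.dvd_iff_prime_pow_dvd_dvd]
  rintro q (_ | e) hq hqn
  · simp
  · have := (sum_range_pow_modEq_of_prime_pow_dvd hn hq hqn hk).symm.dvd
    exact Int.natCast_dvd.mp (by exact_mod_cast this)

theorem sum_range_two_mul_add_one {M : Type*} [AddCommMonoid M] (f : ℕ → M) (m : ℕ) :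
    ∑ x ∈ range (2 * m + 1), f x =
      ∑ j ∈ range (m + 1), f (2 * j) + ∑ j ∈ range m, f (2 * j + 1) := by
  induction m with
  | zero => simp
  | succ m ih =>
    rw [show 2 * (m + 1) + 1 = 2 * m + 1 + 1 + 1 by ring, sum_range_succ, sum_range_succ, ih,
      sum_range_succ (fun j => f (2 * j)) (m + 1), sum_range_succ (fun j => f (2 * j + 1)) m,
      show 2 * (m + 1) = 2 * m + 1 + 1 by ring]
    abel

theorem sum_range_two_mul_add_one_pow_modEq {m k : ℕ} (hk : Even k) (hk0 : k ≠ 0) :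
    ∑ x ∈ range (2 * m + 1), (x : ℤ) ^ k ≡ 2 * ∑ x ∈ range (m + 1), (x : ℤ) ^ k
      [ZMOD ((2 * m + 1 : ℕ) : ℤ)] := by
  rw [show range (2 * m + 1) = range (m + 1 + m) by congr 1; ring, sum_range_add,
    two_mul (∑ x ∈ range (m + 1), (x : ℤ) ^ k)]
  refine Int.ModEq.add_left _ ?_
  rw [← sum_range_reflect, sum_range_succ', Nat.cast_zero, zero_pow hk0, add_zero]
  refine Int.ModEq.sum fun j hj => ?_
  have hjm := mem_range.mp hj
  rw [← hk.neg_pow ((j + 1 : ℕ) : ℤ)]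
  refine Int.ModEq.pow k (Int.modEq_iff_dvd.mpr ⟨-1, ?_⟩)
  push_cast [Nat.cast_sub (by omega : j ≤ m - 1), Nat.cast_sub (by omega : 1 ≤ m)]
  ring

theorem stmt_7_general (k m : ℕ) (hk : 0 < k) (heven : Even k) :
    (T k m : ℤ) ≡
      (2 ^ (k - 1) - 1) *
        ∑ p ∈ (2 * m + 1).primeFactors.filter (fun p => (p - 1) ∣ k),
          (((2 * m + 1) / p : ℕ) : ℤ)
      [ZMOD ((2 * m + 1 : ℕ) : ℤ)] := by
  obtain ⟨k, rfl⟩ := Nat.exists_eq_add_one_of_ne_zero hk.ne'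
  have hS := sum_range_pow_modEq_neg_sum_primeFactors (odd_two_mul_add_one m) hk.ne'
  have hrefl := sum_range_two_mul_add_one_pow_modEq (m := m) heven hk.ne'
  have hsplit := sum_range_two_mul_add_one (fun x => (x : ℤ) ^ (k + 1)) m
  simp only [Nat.cast_mul, Nat.cast_ofNat, mul_pow, ← mul_sum] at hsplit
  set S := ∑ x ∈ range (2 * m + 1), (x : ℤ) ^ (k + 1)
  set P := ∑ x ∈ range (m + 1), (x : ℤ) ^ (k + 1)
  set F := ∑ p ∈ (2 * m + 1).primeFactors with p - 1 ∣ k + 1, (((2 * m + 1) / p : ℕ) : ℤ)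
  calc (T (k + 1) m : ℤ)
      = S - 2 ^ k * (2 * P) := by rw [hsplit, T]; push_cast; ring
    _ ≡ S - 2 ^ k * S [ZMOD ((2 * m + 1 : ℕ) : ℤ)] :=
        (Int.ModEq.refl S).sub (hrefl.symm.mul_left _)
    _ = -(2 ^ k - 1) * S := by ring
    _ ≡ -(2 ^ k - 1) * -F [ZMOD ((2 * m + 1 : ℕ) : ℤ)] := hS.mul_left _
    _ = (2 ^ (k + 1 - 1) - 1) * F := by rw [Nat.add_sub_cancel]; ring

theorem stmt_7 (k m : ℕ) (hk : 0 < k) (hm : 0 < m) (heven : Even k) :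
    (T k m : ℤ) ≡
      (2 ^ (k - 1) - 1) *
        ∑ p ∈ (2 * m + 1).primeFactors.filter (fun p => (p - 1) ∣ k),
          (((2 * m + 1) / p : ℕ) : ℤ)
      [ZMOD ((2 * m + 1 : ℕ) : ℤ)] :=
  stmt_7_general k m hk heven
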